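/- arXiv:1604.03714 — 2 statements merged into one kernel-verified Lean document; each statement's English description precedes it below -/
import Mathlib

section
/- Let α_i, β_i ∈ ℝ³ be linearly independent, let k_α, k_β, l_α, l_β > 0 and c_ω ≥ 0. Then the origin of the error system is uniformly globally attractive: for every r > 0 and ε > 0 there exists T > 0 (independent of t₀) such that for every t₀ ∈ ℝ, every continuous Ω : ℝ → ℝ³ with ‖Ω(t)‖ ≤ c_ω for all t, and every solution E of the error system on [t₀, ∞) with ‖E(t₀)‖ ≤ r, one has ‖E(t)‖ ≤ ε for all t ≥ t₀ + T. -/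
open scoped RealInnerProductSpace
open Matrix Filter

noncomputable section

/-- ℝ³ with the Euclidean norm and inner product. -/
abbrev V3 : Type := EuclideanSpace ℝ (Fin 3)

/-- Identity identification of `V3` with plain functions `Fin 3 → ℝ`. -/
def toF (v : V3) : Fin 3 → ℝ := v

/-- Identity identification of plain functions `Fin 3 → ℝ` with `V3`. -/
def toE (v : Fin 3 → ℝ) : V3 := WithLp.toLp 2 v

/-- The cross product on ℝ³. -/
def cross (v w : V3) : V3 := toE (crossProduct (toF v) (toF w))

/-- `(Eα, Eβ, Eb)` is a solution on `[t₀, ∞)` of the error system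
`Ėα = Eb × (αi + Eα) − kα Eα`, `Ėβ = Eb × (βi + Eβ) − kβ Eβ`,
`Ėb = Ω × Eb + lα Eα × αi + lβ Eβ × βi`. -/
def IsSolution (αi βi : V3) (kα kβ lα lβ : ℝ) (Ω : ℝ → V3) (t₀ : ℝ)
    (Eα Eβ Eb : ℝ → V3) : Prop :=
  ∀ t ∈ Set.Ici t₀,
    HasDerivWithinAt Eα (cross (Eb t) (αi + Eα t) - kα • Eα t) (Set.Ici t₀) t ∧
    HasDerivWithinAt Eβ (cross (Eb t) (βi + Eβ t) - kβ • Eβ t) (Set.Ici t₀) t ∧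
    HasDerivWithinAt Eb
      (cross (Ω t) (Eb t) + lα • cross (Eα t) αi + lβ • cross (Eβ t) βi) (Set.Ici t₀) t

/-- The Euclidean norm of a state `(Eα, Eβ, Eb) ∈ ℝ³ × ℝ³ × ℝ³`. -/
def stateNorm (Eα Eβ Eb : V3) : ℝ := Real.sqrt (‖Eα‖ ^ 2 + ‖Eβ‖ ^ 2 + ‖Eb‖ ^ 2)


/-
Along solutions, `V = lα ‖Eα‖² + lβ ‖Eβ‖² + ‖Eb‖²` satisfies `V̇ = -2 kα lα ‖Eα‖² - 2 kβ lβ ‖Eβ‖²`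
(the coupling terms are triple products that cancel), so `V` is nonincreasing and `‖Eb‖` stays
below a bound depending only on `r`. `V̇` does not see `Eb`; the cross term
`N = ⟪Eα, Eb × αi⟫ + ⟪Eβ, Eb × βi⟫` does: as `αi`, `βi` are independent,
`‖c × αi‖² + ‖c × βi‖² ≥ λ ‖c‖²`, and on the bounded region `Ṅ ≥ λ/2 ‖Eb‖² - D (‖Eα‖² + ‖Eβ‖²)`.
For small `μ > 0`, `W = V - μ N` is equivalent to the squared state norm and `Ẇ ≤ -κ W`, giving
exponential decay with rate and constant that depend only on `r` and the parameters.
-/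

open Set Real

lemma toF_cross (v w : V3) : toF (cross v w) = toF v ⨯₃ toF w := rfl

lemma inner_eq_dotProduct (x y : V3) : ⟪x, y⟫ = toF x ⬝ᵥ toF y := by
  rw [EuclideanSpace.inner_eq_star_dotProduct, dotProduct_comm]; rfl

lemma inner_cross_self (u v : V3) : ⟪u, cross v u⟫ = 0 := by
  rw [inner_eq_dotProduct, toF_cross, dot_cross_self]

lemma inner_cross_eq_neg_inner_cross (u v w : V3) : ⟪u, cross v w⟫ = -⟪v, cross u w⟫ := by
  rw [inner_eq_dotProduct, inner_eq_dotProduct, toF_cross, toF_cross,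
    triple_product_permutation (toF u), ← cross_anticomm (toF u), dotProduct_neg]

lemma norm_cross_sq (v w : V3) : ‖cross v w‖ ^ 2 = ‖v‖ ^ 2 * ‖w‖ ^ 2 - ⟪v, w⟫ ^ 2 := by
  simp only [← real_inner_self_eq_norm_sq, inner_eq_dotProduct, toF_cross, cross_dot_cross,
    dotProduct_comm (toF w) (toF v)]
  ring

lemma norm_cross_le (v w : V3) : ‖cross v w‖ ≤ ‖v‖ * ‖w‖ := by
  refine le_of_sq_le_sq ?_ (by positivity)
  rw [norm_cross_sq, mul_pow]
  nlinarith [sq_nonneg ⟪v, w⟫]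

lemma cross_add_right (u v w : V3) : cross u (v + w) = cross u v + cross u w := by
  simp [cross, toE, toF]

lemma cross_eq_zero_iff_not_linearIndependent (v w : V3) :
    cross v w = 0 ↔ ¬ LinearIndependent ℝ ![v, w] := by
  have hcomp : ⇑(WithLp.linearEquiv 2 ℝ (Fin 3 → ℝ)) ∘ ![v, w] = ![toF v, toF w] := by
    ext i : 1; fin_cases i <;> rfl
  rw [← (WithLp.linearEquiv 2 ℝ (Fin 3 → ℝ)).toLinearMap.linearIndependent_iff_of_injOn
    (WithLp.linearEquiv 2 ℝ (Fin 3 → ℝ)).injective.injOn, LinearEquiv.coe_coe, hcomp,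
    ← crossProduct_ne_zero_iff_linearIndependent, not_not, ← toF_cross]
  exact (WithLp.ofLp_eq_zero 2).symm

def crossRight (w : V3) : V3 →L[ℝ] V3 :=
  LinearMap.toContinuousLinearMap <|
    (WithLp.linearEquiv 2 ℝ (Fin 3 → ℝ)).symm.toLinearMap ∘ₗ (crossProduct.flip (toF w)) ∘ₗ
      (WithLp.linearEquiv 2 ℝ (Fin 3 → ℝ)).toLinearMap

@[simp] lemma crossRight_apply (w v : V3) : crossRight w v = cross v w := rfl

lemma HasDerivWithinAt.cross_const {f : ℝ → V3} {f' : V3} {s : Set ℝ} {t : ℝ}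
    (hf : HasDerivWithinAt f f' s t) (w : V3) :
    HasDerivWithinAt (fun τ => cross (f τ) w) (cross f' w) s t :=
  (crossRight w).hasFDerivAt.comp_hasDerivWithinAt t hf

lemma exists_smul_eq_of_cross_eq_zero {v w : V3} (hw : w ≠ 0) (h : cross v w = 0) :
    ∃ a : ℝ, a • w = v := by
  simpa [linearIndependent_fin2, hw] using (cross_eq_zero_iff_not_linearIndependent v w).mp h

lemma eq_zero_of_cross_eq_zero_of_cross_eq_zero {α β c : V3}
    (hind : LinearIndependent ℝ ![α, β]) (hα : cross c α = 0) (hβ : cross c β = 0) : c = 0 := by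
  obtain ⟨a, rfl⟩ := exists_smul_eq_of_cross_eq_zero (w := α) (hind.ne_zero 0) hα
  obtain ⟨b, hb⟩ := exists_smul_eq_of_cross_eq_zero (w := β) (hind.ne_zero 1) hβ
  obtain ⟨rfl, -⟩ :=
    LinearIndependent.pair_iff.mp hind a (-b) (by rw [neg_smul, hb, add_neg_cancel])
  exact zero_smul ℝ α

/-- `c ↦ (c × α, c × β)` is injective, hence bounded below on the finite-dimensional `V3`. -/
lemma exists_pos_mul_sq_norm_le_sq_norm_cross {α β : V3} (hind : LinearIndependent ℝ ![α, β]) :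
    ∃ lam > 0, ∀ c : V3, lam * ‖c‖ ^ 2 ≤ ‖cross c α‖ ^ 2 + ‖cross c β‖ ^ 2 := by
  let L : V3 →ₗ[ℝ] V3 × V3 := ((crossRight α).prod (crossRight β) : V3 →L[ℝ] V3 × V3)
  have hL : LinearMap.ker L = ⊥ := LinearMap.ker_eq_bot'.mpr fun c hc =>
    eq_zero_of_cross_eq_zero_of_cross_eq_zero hind (congrArg Prod.fst hc) (congrArg Prod.snd hc)
  obtain ⟨K, hK⟩ := L.exists_antilipschitzWith hL |>.imp fun _ h => h.2
  obtain ⟨a, ha, hbound⟩ := antilipschitzWith_iff_exists_mul_le_norm.mp ⟨K, hK⟩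
  refine ⟨a ^ 2, by positivity, fun c => ?_⟩
  have h := hbound c
  simp only [L, ContinuousLinearMap.coe_coe, ContinuousLinearMap.prod_apply, crossRight_apply,
    Prod.norm_def] at h
  calc a ^ 2 * ‖c‖ ^ 2 = (a * ‖c‖) ^ 2 := by ring
    _ ≤ max ‖cross c α‖ ‖cross c β‖ ^ 2 := pow_le_pow_left₀ (by positivity) h 2
    _ ≤ ‖cross c α‖ ^ 2 + ‖cross c β‖ ^ 2 := by
      rcases max_cases ‖cross c α‖ ‖cross c β‖ with ⟨h', -⟩ | ⟨h', -⟩ <;> rw [h'] <;>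
        nlinarith [sq_nonneg ‖cross c α‖, sq_nonneg ‖cross c β‖]

lemma le_mul_exp_of_hasDerivWithinAt_le_mul {f f' : ℝ → ℝ} {K t₀ t : ℝ}
    (hf : ∀ τ ∈ Ici t₀, HasDerivWithinAt f (f' τ) (Ici t₀) τ)
    (hK : ∀ τ ∈ Ici t₀, f' τ ≤ K * f τ) (ht : t₀ ≤ t) :
    f t ≤ f t₀ * exp (K * (t - t₀)) := by
  have h := le_gronwallBound_of_liminf_deriv_right_le (ε := 0) (b := t)
    (fun τ hτ => ((hf τ hτ.1).continuousWithinAt).mono Icc_subset_Ici_self)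
    (fun τ hτ _ hr => ((hf τ hτ.1).mono (Ici_subset_Ici.mpr hτ.1)).liminf_right_slope_le hr)
    le_rfl (fun τ hτ => (add_zero (K * f τ)).symm ▸ hK τ hτ.1) t ⟨ht, le_rfl⟩
  rwa [gronwallBound_ε0] at h

lemma exists_pos_mul_exp_neg_le (C : ℝ) {κ δ : ℝ} (hκ : 0 < κ) (hδ : 0 < δ) :
    ∃ T > 0, C * exp (-κ * T) ≤ δ := by
  have hlim : Tendsto (fun T => C * exp (-κ * T)) atTop (nhds 0) := by
    simpa using (tendsto_exp_neg_atTop_nhds_zero.comp (tendsto_id.const_mul_atTop hκ)).const_mul C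
  obtain ⟨T, hT⟩ := ((hlim.eventually (ge_mem_nhds hδ)).and (eventually_gt_atTop 0)).exists
  exact ⟨T, hT.2, hT.1⟩

lemma exists_strict_lyapunov_of_cross_term {a b c d m M : ℝ} (ha : 0 < a) (hb : 0 < b)
    (hc : 0 ≤ c) (hd : 0 ≤ d) (hm : 0 < m) (hM : 0 ≤ M) :
    ∃ μ > 0, ∃ κ > 0, ∀ {p q V N V' N' : ℝ}, 0 ≤ p → 0 ≤ q →
      V ∈ Icc (m * (p + q)) (M * (p + q)) → |N| ≤ c * (p + q) → V' ≤ -a * p →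
      b * q - d * p ≤ N' →
      V - μ * N ∈ Icc (m / 2 * (p + q)) ((M + m / 2) * (p + q)) ∧
        V' - μ * N' ≤ -κ * (V - μ * N) := by
  -- `μ c ≤ m / 2` keeps `V - μ N` comparable to `p + q`; `μ d ≤ a / 2` lets `a p` absorb `μ d p`.
  set μ := min (m / (2 * (c + 1))) (a / (2 * (d + 1)))
  have hμ : 0 < μ := by positivity
  have hμc : μ * c ≤ m / 2 := by
    have := min_le_left (m / (2 * (c + 1))) (a / (2 * (d + 1)))
    rw [le_div_iff₀ (by positivity)] at this
    nlinarith
  have hμd : μ * d ≤ a / 2 := by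
    have := min_le_right (m / (2 * (c + 1))) (a / (2 * (d + 1)))
    rw [le_div_iff₀ (by positivity)] at this
    nlinarith
  set κ₀ := min (a / 2) (μ * b)
  have hκ₀ : 0 < κ₀ := by positivity
  refine ⟨μ, hμ, κ₀ / (M + m / 2), by positivity, fun {p q V N V' N'} hp hq hV hN hV' hN' => ?_⟩
  have hμN : |μ * N| ≤ m / 2 * (p + q) := by
    rw [abs_mul, abs_of_pos hμ]
    calc μ * |N| ≤ μ * c * (p + q) := by
          rw [mul_assoc]; exact mul_le_mul_of_nonneg_left hN hμ.le
      _ ≤ m / 2 * (p + q) := mul_le_mul_of_nonneg_right hμc (add_nonneg hp hq)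
  obtain ⟨hμN₁, hμN₂⟩ := abs_le.mp hμN
  have hW : V - μ * N ∈ Icc (m / 2 * (p + q)) ((M + m / 2) * (p + q)) := by
    constructor <;> linarith [hV.1, hV.2]
  refine ⟨hW, ?_⟩
  have hgain : V' - μ * N' ≤ -κ₀ * (p + q) := by
    nlinarith [mul_le_mul_of_nonneg_left hN' hμ.le,
      mul_le_mul_of_nonneg_right (min_le_left (a / 2) (μ * b)) hp,
      mul_le_mul_of_nonneg_right (min_le_right (a / 2) (μ * b)) hq,
      mul_le_mul_of_nonneg_right hμd hp]
  have hκW : κ₀ / (M + m / 2) * (V - μ * N) ≤ κ₀ * (p + q) := by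
    rw [div_mul_eq_mul_div, div_le_iff₀ (by positivity), mul_assoc, mul_comm (p + q)]
    exact mul_le_mul_of_nonneg_left hW.2 hκ₀.le
  linarith

theorem exists_exp_decay_of_lyapunov_of_cross_term {a b c d m M : ℝ} (ha : 0 < a) (hb : 0 < b)
    (hc : 0 ≤ c) (hd : 0 ≤ d) (hm : 0 < m) (hM : 0 ≤ M) :
    ∃ κ > 0, ∃ C > 0, ∀ {t₀ : ℝ} {V N V' N' p q : ℝ → ℝ},
      (∀ t ∈ Ici t₀, HasDerivWithinAt V (V' t) (Ici t₀) t) →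
      (∀ t ∈ Ici t₀, HasDerivWithinAt N (N' t) (Ici t₀) t) →
      (∀ t ∈ Ici t₀, 0 ≤ p t ∧ 0 ≤ q t) →
      (∀ t ∈ Ici t₀, V t ∈ Icc (m * (p t + q t)) (M * (p t + q t))) →
      (∀ t ∈ Ici t₀, |N t| ≤ c * (p t + q t)) →
      (∀ t ∈ Ici t₀, V' t ≤ -a * p t) →
      (∀ t ∈ Ici t₀, b * q t - d * p t ≤ N' t) →
      ∀ t ≥ t₀, p t + q t ≤ C * (p t₀ + q t₀) * exp (-κ * (t - t₀)) := by
  obtain ⟨μ, -, κ, hκ, hstrict⟩ := exists_strict_lyapunov_of_cross_term ha hb hc hd hm hM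
  refine ⟨κ, hκ, (M + m / 2) / (m / 2), by positivity, ?_⟩
  intro t₀ V N V' N' p q hV hN hpq hVS hNS hV' hN' t ht
  have hW (τ : ℝ) (hτ : τ ∈ Ici t₀) := hstrict (hpq τ hτ).1 (hpq τ hτ).2 (hVS τ hτ) (hNS τ hτ)
    (hV' τ hτ) (hN' τ hτ)
  have hdecay := le_mul_exp_of_hasDerivWithinAt_le_mul
    (fun τ hτ => (hV τ hτ).sub ((hN τ hτ).const_mul μ)) (fun τ hτ => (hW τ hτ).2) ht
  rw [div_mul_eq_mul_div, div_mul_eq_mul_div, le_div_iff₀ (by positivity)]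
  calc (p t + q t) * (m / 2) ≤ V t - μ * N t := by linarith [(hW t ht).1.1]
    _ ≤ (V t₀ - μ * N t₀) * exp (-κ * (t - t₀)) := hdecay
    _ ≤ (M + m / 2) * (p t₀ + q t₀) * exp (-κ * (t - t₀)) :=
        mul_le_mul_of_nonneg_right (hW t₀ self_mem_Ici).1.2 (exp_pos _).le

lemma sq_norm_cross_sub_le_inner_add_inner (α x z u : V3) {k : ℝ} (hk : 0 ≤ k) :
    ‖cross z α‖ ^ 2 - ‖α‖ * ‖x‖ * ((‖z‖ + k) * ‖z‖ + ‖u‖)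
      ≤ ⟪x, cross u α⟫ + ⟪cross z (α + x) - k • x, cross z α⟫ := by
  have hzx : -⟪cross z x, cross z α⟫ ≤ ‖z‖ * ‖x‖ * (‖z‖ * ‖α‖) :=
    (neg_le_abs _).trans <| (abs_real_inner_le_norm _ _).trans <|
      mul_le_mul (norm_cross_le _ _) (norm_cross_le _ _) (norm_nonneg _) (by positivity)
  have hx : ⟪x, cross z α⟫ ≤ ‖x‖ * (‖z‖ * ‖α‖) :=
    (real_inner_le_norm _ _).trans <| mul_le_mul_of_nonneg_left (norm_cross_le _ _) (norm_nonneg _)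
  have hu : -⟪x, cross u α⟫ ≤ ‖x‖ * (‖u‖ * ‖α‖) :=
    (neg_le_abs _).trans <| (abs_real_inner_le_norm _ _).trans <|
      mul_le_mul_of_nonneg_left (norm_cross_le _ _) (norm_nonneg _)
  rw [cross_add_right, inner_sub_left, inner_add_left, real_inner_self_eq_norm_sq,
    real_inner_smul_left]
  nlinarith [mul_le_mul_of_nonneg_left hx hk]

lemma norm_add_smul_cross_le (ω x y z α β : V3) {lα lβ : ℝ} (hlα : 0 ≤ lα) (hlβ : 0 ≤ lβ) :
    ‖cross ω z + lα • cross x α + lβ • cross y β‖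
      ≤ ‖ω‖ * ‖z‖ + lα * (‖α‖ * ‖x‖) + lβ * (‖β‖ * ‖y‖) := by
  refine norm_add₃_le.trans (add_le_add_three (norm_cross_le _ _) ?_ ?_) <;>
    rw [norm_smul, Real.norm_of_nonneg ‹_›, mul_comm ‖_‖ ‖_‖] <;> gcongr <;> exact norm_cross_le _ _

def lyapunov (lα lβ : ℝ) (x y z : V3) : ℝ := lα * ‖x‖ ^ 2 + lβ * ‖y‖ ^ 2 + ‖z‖ ^ 2

def crossTerm (αi βi x y z : V3) : ℝ := ⟪x, cross z αi⟫ + ⟪y, cross z βi⟫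

def crossTermDeriv (αi βi : V3) (kα kβ lα lβ : ℝ) (ω x y z : V3) : ℝ :=
  let u := cross ω z + lα • cross x αi + lβ • cross y βi
  ⟪x, cross u αi⟫ + ⟪cross z (αi + x) - kα • x, cross z αi⟫ +
    (⟪y, cross u βi⟫ + ⟪cross z (βi + y) - kβ • y, cross z βi⟫)

lemma lyapunov_mem_Icc (lα lβ : ℝ) (x y z : V3) :
    lyapunov lα lβ x y z ∈ Icc (min (min lα lβ) 1 * (‖x‖ ^ 2 + ‖y‖ ^ 2 + ‖z‖ ^ 2))
      (max (max lα lβ) 1 * (‖x‖ ^ 2 + ‖y‖ ^ 2 + ‖z‖ ^ 2)) := by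
  have hx := sq_nonneg ‖x‖; have hy := sq_nonneg ‖y‖; have hz := sq_nonneg ‖z‖
  constructor <;> simp only [lyapunov] <;>
    nlinarith [min_le_left (min lα lβ) 1, min_le_right (min lα lβ) 1, min_le_left lα lβ,
      min_le_right lα lβ, le_max_left (max lα lβ) 1, le_max_right (max lα lβ) 1,
      le_max_left lα lβ, le_max_right lα lβ]

lemma abs_crossTerm_le (αi βi x y z : V3) :
    |crossTerm αi βi x y z| ≤ (‖αi‖ + ‖βi‖) * (‖x‖ ^ 2 + ‖y‖ ^ 2 + ‖z‖ ^ 2) := by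
  have hterm (v w : V3) : |⟪v, cross z w⟫| ≤ ‖w‖ * (‖v‖ ^ 2 + ‖z‖ ^ 2) :=
    calc |⟪v, cross z w⟫| ≤ ‖v‖ * (‖z‖ * ‖w‖) :=
          (abs_real_inner_le_norm _ _).trans <|
            mul_le_mul_of_nonneg_left (norm_cross_le _ _) (norm_nonneg _)
      _ ≤ ‖w‖ * (‖v‖ ^ 2 + ‖z‖ ^ 2) := by
          nlinarith [mul_nonneg (norm_nonneg w) (sq_nonneg (‖v‖ - ‖z‖)),
            mul_nonneg (norm_nonneg w) (mul_nonneg (norm_nonneg v) (norm_nonneg z))]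
  have := hterm x αi; have := hterm y βi
  refine (abs_add_le _ _).trans ?_
  nlinarith [norm_nonneg αi, norm_nonneg βi, sq_nonneg ‖x‖, sq_nonneg ‖y‖]

lemma half_mul_sq_sub_le_crossTermDeriv {αi βi ω x y z : V3} {kα kβ lα lβ lam R cω : ℝ}
    (hkα : 0 ≤ kα) (hkβ : 0 ≤ kβ) (hlα : 0 ≤ lα) (hlβ : 0 ≤ lβ) (hlam : 0 < lam)
    (hcoer : lam * ‖z‖ ^ 2 ≤ ‖cross z αi‖ ^ 2 + ‖cross z βi‖ ^ 2) (hz : ‖z‖ ≤ R)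
    (hω : ‖ω‖ ≤ cω) :
    lam / 2 * ‖z‖ ^ 2 - ((R + kα + kβ + cω) ^ 2 / (2 * lam) + lα + lβ)
        * (‖αi‖ ^ 2 + ‖βi‖ ^ 2) * (‖x‖ ^ 2 + ‖y‖ ^ 2)
      ≤ crossTermDeriv αi βi kα kβ lα lβ ω x y z := by
  set u := cross ω z + lα • cross x αi + lβ • cross y βi
  set s := ‖αi‖ * ‖x‖ + ‖βi‖ * ‖y‖
  set P := R + kα + kβ + cω
  have hu := norm_add_smul_cross_le ω x y z αi βi hlα hlβ
  have hα := sq_norm_cross_sub_le_inner_add_inner αi x z u hkα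
  have hβ := sq_norm_cross_sub_le_inner_add_inner βi y z u hkβ
  have hP (k : ℝ) (hk : k ≤ kα + kβ) : (‖z‖ + k) * ‖z‖ + ‖u‖ ≤ P * ‖z‖ + (lα + lβ) * s := by
    nlinarith [norm_nonneg z, norm_nonneg ω, mul_nonneg (norm_nonneg αi) (norm_nonneg x),
      mul_nonneg (norm_nonneg βi) (norm_nonneg y)]
  have hloss : ‖αi‖ * ‖x‖ * ((‖z‖ + kα) * ‖z‖ + ‖u‖) + ‖βi‖ * ‖y‖ * ((‖z‖ + kβ) * ‖z‖ + ‖u‖)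
      ≤ s * (P * ‖z‖ + (lα + lβ) * s) := by
    calc _ ≤ ‖αi‖ * ‖x‖ * (P * ‖z‖ + (lα + lβ) * s) + ‖βi‖ * ‖y‖ * (P * ‖z‖ + (lα + lβ) * s) :=
          add_le_add (mul_le_mul_of_nonneg_left (hP kα (by linarith)) (by positivity))
            (mul_le_mul_of_nonneg_left (hP kβ (by linarith)) (by positivity))
      _ = s * (P * ‖z‖ + (lα + lβ) * s) := by ring
  have hs : s ^ 2 ≤ (‖αi‖ ^ 2 + ‖βi‖ ^ 2) * (‖x‖ ^ 2 + ‖y‖ ^ 2) := by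
    nlinarith [sq_nonneg (‖αi‖ * ‖y‖ - ‖βi‖ * ‖x‖)]
  have hyoung : P * s * ‖z‖ ≤ lam / 2 * ‖z‖ ^ 2 + P ^ 2 / (2 * lam) * s ^ 2 := by
    have h : lam / 2 * ‖z‖ ^ 2 + P ^ 2 / (2 * lam) * s ^ 2 - P * s * ‖z‖
        = (lam * ‖z‖ - P * s) ^ 2 / (2 * lam) := by field_simp; ring
    nlinarith [h, (by positivity : 0 ≤ (lam * ‖z‖ - P * s) ^ 2 / (2 * lam))]
  have := mul_le_mul_of_nonneg_left hs (by positivity : 0 ≤ P ^ 2 / (2 * lam) + (lα + lβ))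
  simp only [crossTermDeriv]
  nlinarith

namespace IsSolution

variable {αi βi : V3} {kα kβ lα lβ : ℝ} {Ω : ℝ → V3} {t₀ : ℝ} {Eα Eβ Eb : ℝ → V3}

lemma hasDerivWithinAt_lyapunov (h : IsSolution αi βi kα kβ lα lβ Ω t₀ Eα Eβ Eb) {t : ℝ}
    (ht : t ∈ Ici t₀) :
    HasDerivWithinAt (fun τ => lyapunov lα lβ (Eα τ) (Eβ τ) (Eb τ))
      (-2 * (kα * lα * ‖Eα t‖ ^ 2 + kβ * lβ * ‖Eβ t‖ ^ 2)) (Ici t₀) t := by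
  obtain ⟨hα, hβ, hb⟩ := h t ht
  refine (((hα.norm_sq.const_mul lα).add (hβ.norm_sq.const_mul lβ)).add hb.norm_sq).congr_deriv ?_
  simp only [inner_sub_right, inner_add_right, cross_add_right, inner_cross_self,
    real_inner_smul_right, real_inner_self_eq_norm_sq,
    inner_cross_eq_neg_inner_cross (Eb t) (Eα t), inner_cross_eq_neg_inner_cross (Eb t) (Eβ t)]
  ring

lemma hasDerivWithinAt_crossTerm (h : IsSolution αi βi kα kβ lα lβ Ω t₀ Eα Eβ Eb) {t : ℝ}
    (ht : t ∈ Ici t₀) :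
    HasDerivWithinAt (fun τ => crossTerm αi βi (Eα τ) (Eβ τ) (Eb τ))
      (crossTermDeriv αi βi kα kβ lα lβ (Ω t) (Eα t) (Eβ t) (Eb t)) (Ici t₀) t := by
  obtain ⟨hα, hβ, hb⟩ := h t ht
  exact (hα.inner ℝ (hb.cross_const αi)).add (hβ.inner ℝ (hb.cross_const βi))

lemma lyapunov_le (h : IsSolution αi βi kα kβ lα lβ Ω t₀ Eα Eβ Eb) (hkα : 0 ≤ kα)
    (hkβ : 0 ≤ kβ) (hlα : 0 ≤ lα) (hlβ : 0 ≤ lβ) {t : ℝ} (ht : t₀ ≤ t) :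
    lyapunov lα lβ (Eα t) (Eβ t) (Eb t) ≤ lyapunov lα lβ (Eα t₀) (Eβ t₀) (Eb t₀) := by
  have hV := le_mul_exp_of_hasDerivWithinAt_le_mul (K := 0)
    (fun τ hτ => h.hasDerivWithinAt_lyapunov hτ) (fun τ _ => by
      rw [zero_mul, neg_mul, neg_nonpos]; positivity) ht
  rwa [zero_mul, exp_zero, mul_one] at hV

lemma norm_le_of_stateNorm_le (h : IsSolution αi βi kα kβ lα lβ Ω t₀ Eα Eβ Eb) (hkα : 0 ≤ kα)
    (hkβ : 0 ≤ kβ) (hlα : 0 ≤ lα) (hlβ : 0 ≤ lβ) {r : ℝ}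
    (h₀ : stateNorm (Eα t₀) (Eβ t₀) (Eb t₀) ≤ r) {t : ℝ} (ht : t₀ ≤ t) :
    ‖Eb t‖ ≤ √(max (max lα lβ) 1 * r ^ 2) := by
  refine (Real.le_sqrt (norm_nonneg _) (by positivity)).mpr ?_
  calc ‖Eb t‖ ^ 2 ≤ lyapunov lα lβ (Eα t) (Eβ t) (Eb t) := by
        simp only [lyapunov]; nlinarith [sq_nonneg ‖Eα t‖, sq_nonneg ‖Eβ t‖]
    _ ≤ lyapunov lα lβ (Eα t₀) (Eβ t₀) (Eb t₀) := h.lyapunov_le hkα hkβ hlα hlβ ht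
    _ ≤ max (max lα lβ) 1 * (‖Eα t₀‖ ^ 2 + ‖Eβ t₀‖ ^ 2 + ‖Eb t₀‖ ^ 2) :=
        (lyapunov_mem_Icc lα lβ _ _ _).2
    _ ≤ max (max lα lβ) 1 * r ^ 2 := by
        gcongr; exact (Real.sqrt_le_iff.mp h₀).2

end IsSolution

theorem error_system_uniform_global_attractivity_general
    (αi βi : V3) (hind : LinearIndependent ℝ ![αi, βi])
    (kα kβ lα lβ : ℝ) (hkα : 0 < kα) (hkβ : 0 < kβ) (hlα : 0 < lα) (hlβ : 0 < lβ)
    (cω : ℝ) :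
    ∀ r > (0 : ℝ), ∀ ε > (0 : ℝ), ∃ T > (0 : ℝ),
      ∀ (t₀ : ℝ) (Ω : ℝ → V3), Continuous Ω → (∀ t, ‖Ω t‖ ≤ cω) →
        ∀ Eα Eβ Eb : ℝ → V3, IsSolution αi βi kα kβ lα lβ Ω t₀ Eα Eβ Eb →
          stateNorm (Eα t₀) (Eβ t₀) (Eb t₀) ≤ r →
          ∀ t ≥ t₀ + T, stateNorm (Eα t) (Eβ t) (Eb t) ≤ ε := by
  intro r _ ε hε
  obtain ⟨lam, hlam, hcoer⟩ := exists_pos_mul_sq_norm_le_sq_norm_cross hind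
  set R := √(max (max lα lβ) 1 * r ^ 2)
  obtain ⟨κ, hκ, C, hC, hdecay⟩ := exists_exp_decay_of_lyapunov_of_cross_term
    (a := 2 * min (kα * lα) (kβ * lβ)) (b := lam / 2) (c := ‖αi‖ + ‖βi‖)
    (d := ((R + kα + kβ + cω) ^ 2 / (2 * lam) + lα + lβ) * (‖αi‖ ^ 2 + ‖βi‖ ^ 2))
    (m := min (min lα lβ) 1) (M := max (max lα lβ) 1) (by positivity) (by positivity)
    (by positivity) (by positivity) (by positivity) (by positivity)
  obtain ⟨T, hT, hTε⟩ := exists_pos_mul_exp_neg_le (C * r ^ 2) hκ (pow_pos hε 2)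
  refine ⟨T, hT, fun t₀ Ω _ hΩ Eα Eβ Eb hsol h₀ t ht => ?_⟩
  have hdiss (x y : V3) : -2 * (kα * lα * ‖x‖ ^ 2 + kβ * lβ * ‖y‖ ^ 2)
      ≤ -(2 * min (kα * lα) (kβ * lβ)) * (‖x‖ ^ 2 + ‖y‖ ^ 2) := by
    nlinarith [min_le_left (kα * lα) (kβ * lβ), min_le_right (kα * lα) (kβ * lβ),
      sq_nonneg ‖x‖, sq_nonneg ‖y‖]
  have hS := hdecay (p := fun τ => ‖Eα τ‖ ^ 2 + ‖Eβ τ‖ ^ 2) (q := fun τ => ‖Eb τ‖ ^ 2)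
    (fun τ hτ => hsol.hasDerivWithinAt_lyapunov hτ) (fun τ hτ => hsol.hasDerivWithinAt_crossTerm hτ)
    (fun τ _ => ⟨by positivity, by positivity⟩) (fun τ _ => lyapunov_mem_Icc lα lβ _ _ _)
    (fun τ _ => abs_crossTerm_le αi βi _ _ _) (fun τ _ => hdiss _ _)
    (fun τ hτ => half_mul_sq_sub_le_crossTermDeriv hkα.le hkβ.le hlα.le hlβ.le hlam (hcoer _)
      (hsol.norm_le_of_stateNorm_le hkα.le hkβ.le hlα.le hlβ.le h₀ hτ) (hΩ τ)) t (by linarith)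
  refine Real.sqrt_le_iff.mpr ⟨hε.le, hS.trans (le_trans ?_ hTε)⟩
  rw [neg_mul, neg_mul]
  gcongr
  · exact (Real.sqrt_le_iff.mp h₀).2
  · linarith

/-- The origin of the error system is uniformly globally attractive. -/
theorem error_system_uniform_global_attractivity
    (αi βi : V3) (hind : LinearIndependent ℝ ![αi, βi])
    (kα kβ lα lβ : ℝ) (hkα : 0 < kα) (hkβ : 0 < kβ) (hlα : 0 < lα) (hlβ : 0 < lβ)
    (cω : ℝ) (hcω : 0 ≤ cω) :
    ∀ r > (0 : ℝ), ∀ ε > (0 : ℝ), ∃ T > (0 : ℝ),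
      ∀ (t₀ : ℝ) (Ω : ℝ → V3), Continuous Ω → (∀ t, ‖Ω t‖ ≤ cω) →
        ∀ Eα Eβ Eb : ℝ → V3, IsSolution αi βi kα kβ lα lβ Ω t₀ Eα Eβ Eb →
          stateNorm (Eα t₀) (Eβ t₀) (Eb t₀) ≤ r →
          ∀ t ≥ t₀ + T, stateNorm (Eα t) (Eβ t) (Eb t) ≤ ε :=
  error_system_uniform_global_attractivity_general αi βi hind kα kβ lα lβ hkα hkβ hlα hlβ cω
end
end

section
/- Let α_i ∈ ℝ³, k_α ∈ ℝ, and let ω, e_α, e_b : ℝ → ℝ³ be differentiable. Let R : ℝ → 3×3 real matrices be differentiable with R(t) special orthogonal for every t and R'(t) = R(t) · ω(t)_×. Suppose e_α satisfies e_α'(t) = e_α(t) × ω(t) − (α(t) + e_α(t)) × e_b(t) − k_α e_α(t), where α(t) := R(t)ᵀ α_i. Then E_α(t) := R(t) e_α(t) satisfies E_α'(t) = E_b(t) × (α_i + E_α(t)) − k_α E_α(t), where E_b(t) := R(t) e_b(t). -/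
/-! By the product rule, `(R e_α)' = R (ω × e_α) + R e_α'`. A rotation preserves cross products, so
`R (ω × e_α)` cancels `R (e_α × ω)`, and `R ((Rᵀ α_i + e_α) × e_b) = (α_i + E_α) × E_b` since `R Rᵀ = 1`. -/

open scoped RealInnerProductSpace
open Matrix Filter

noncomputable section

/-- The skew-symmetric matrix `v_×` with `v_× x = v × x`. -/
def skew (v : V3) : Matrix (Fin 3) (Fin 3) ℝ :=
  !![0, -(toF v 2), toF v 1; toF v 2, 0, -(toF v 0); -(toF v 1), toF v 0, 0]

/-- Matrix-vector multiplication on `V3`. -/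
def mulVecE (M : Matrix (Fin 3) (Fin 3) ℝ) (x : V3) : V3 := toE (M.mulVec (toF x))

theorem Matrix.transpose_mulVec_cross_mulVec {R : Type*} [CommRing R]
    (M : Matrix (Fin 3) (Fin 3) R) (v w : Fin 3 → R) :
    Mᵀ *ᵥ ((M *ᵥ v) ⨯₃ (M *ᵥ w)) = M.det • (v ⨯₃ w) := by
  ext i
  fin_cases i <;>
    simp only [mulVec, dotProduct, Fin.zero_eta, Fin.mk_one, Fin.reduceFinMk, Fin.isValue,
      transpose_apply, cross_apply, Nat.succ_eq_add_one, Nat.reduceAdd, Fin.sum_univ_three,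
      cons_val_zero, cons_val_one, cons_val, det_fin_three, Pi.smul_apply, smul_eq_mul] <;>
    ring

theorem Matrix.mulVec_cross {R : Type*} [CommRing R] {M : Matrix (Fin 3) (Fin 3) R}
    (hM : Mᵀ * M = 1) (hdet : M.det = 1) (v w : Fin 3 → R) :
    M *ᵥ (v ⨯₃ w) = (M *ᵥ v) ⨯₃ (M *ᵥ w) := by
  have hM' : M * Mᵀ = 1 := mul_eq_one_comm.mp hM
  rw [← one_smul R (v ⨯₃ w), ← hdet, ← transpose_mulVec_cross_mulVec, mulVec_mulVec, hM',
    one_mulVec]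

theorem skew_mulVec (v : V3) (x : Fin 3 → ℝ) : skew v *ᵥ x = toF v ⨯₃ x := by
  ext i
  fin_cases i <;>
    simp only [mulVec, dotProduct, skew, Fin.zero_eta, Fin.mk_one, Fin.reduceFinMk, Fin.isValue,
      of_apply, cons_val', cons_val_fin_one, cons_val_zero, cons_val_one, cons_val,
      Fin.sum_univ_three, cross_apply, Nat.succ_eq_add_one, Nat.reduceAdd] <;>
    ring

theorem hasDerivAt_mulVec {𝕜 : Type*} [NontriviallyNormedField 𝕜] {m n : Type*}
    [Fintype n] {A : 𝕜 → Matrix m n 𝕜} {A' : Matrix m n 𝕜} {x : 𝕜 → n → 𝕜}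
    {x' : n → 𝕜} {t : 𝕜} (hA : ∀ i j, HasDerivAt (fun s => A s i j) (A' i j) t)
    (hx : HasDerivAt x x' t) :
    HasDerivAt (fun s => A s *ᵥ x s) (A' *ᵥ x t + A t *ᵥ x') t := by
  refine hasDerivAt_pi.2 fun i => ?_
  have hxj : ∀ j, HasDerivAt (fun s => x s j) (x' j) t := hasDerivAt_pi.1 hx
  simpa [mulVec, dotProduct, Finset.sum_add_distrib] using
    HasDerivAt.fun_sum fun j _ => (hA i j).mul (hxj j)

theorem PiLp.hasDerivAt_iff {𝕜 : Type*} [NontriviallyNormedField 𝕜] {p : ENNReal} [Fact (1 ≤ p)]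
    {ι : Type*} [Fintype ι] {E : ι → Type*} [∀ i, NormedAddCommGroup (E i)]
    [∀ i, NormedSpace 𝕜 (E i)] {f : 𝕜 → PiLp p E} {f' : PiLp p E} {t : 𝕜} :
    HasDerivAt (fun s => WithLp.ofLp (f s)) (WithLp.ofLp f') t ↔ HasDerivAt f f' t :=
  ⟨fun h => by
    have := (PiLp.hasFDerivAt_toLp (𝕜 := 𝕜) p (WithLp.ofLp (f t))).comp_hasDerivAt t h
    exact this,
  fun h => by
    have := (PiLp.hasFDerivAt_ofLp (𝕜 := 𝕜) p (f t)).comp_hasDerivAt t h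
    exact this⟩

theorem rotated_error_identity {M : Matrix (Fin 3) (Fin 3) ℝ} (hM : Mᵀ * M = 1)
    (hdet : M.det = 1) (ω : V3) (a b e : Fin 3 → ℝ) (k : ℝ) :
    (M * skew ω) *ᵥ e + M *ᵥ (e ⨯₃ toF ω - (Mᵀ *ᵥ a + e) ⨯₃ b - k • e)
      = (M *ᵥ b) ⨯₃ (a + M *ᵥ e) - k • M *ᵥ e := by
  have ha : M *ᵥ (Mᵀ *ᵥ a) = a := by
    rw [mulVec_mulVec, mul_eq_one_comm.mp hM, one_mulVec]
  rw [← mulVec_mulVec, skew_mulVec, mulVec_sub, mulVec_sub, mulVec_smul, mulVec_cross hM hdet,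
    mulVec_cross hM hdet, mulVec_cross hM hdet, mulVec_add, ha,
    ← cross_anticomm (a + M *ᵥ e), ← cross_anticomm (M *ᵥ e)]
  abel

theorem rotated_error_equation_general
    (αi : V3) (kα : ℝ) (ω eα eb : ℝ → V3)
    (R : ℝ → Matrix (Fin 3) (Fin 3) ℝ)
    (hRso : ∀ t, (R t)ᵀ * R t = 1 ∧ (R t).det = 1)
    (hRder : ∀ t i j, HasDerivAt (fun s => R s i j) ((R t * skew (ω t)) i j) t)
    (heα : ∀ t, HasDerivAt eα
      (cross (eα t) (ω t) - cross (mulVecE (R t)ᵀ αi + eα t) (eb t) - kα • eα t) t) :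
    ∀ t, HasDerivAt (fun s => mulVecE (R s) (eα s))
      (cross (mulVecE (R t) (eb t)) (αi + mulVecE (R t) (eα t))
        - kα • mulVecE (R t) (eα t)) t := by
  intro t
  have hRe := hasDerivAt_mulVec (hRder t) (PiLp.hasDerivAt_iff.2 (heα t))
  exact PiLp.hasDerivAt_iff.1 <| hRe.congr_deriv <|
    rotated_error_identity (hRso t).1 (hRso t).2 (ω t) (toF αi) (toF (eb t)) (toF (eα t)) kα

/-- If `Ṙ = R ω_×` with `R` special orthogonal and
`ė_α = e_α × ω − (α + e_α) × e_b − kα e_α` with `α = Rᵀ αi`, then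
`E_α := R e_α` satisfies `Ė_α = E_b × (αi + E_α) − kα E_α`, where `E_b := R e_b`. -/
theorem rotated_error_equation
    (αi : V3) (kα : ℝ) (ω eα eb : ℝ → V3)
    (hω : Differentiable ℝ ω) (heα_diff : Differentiable ℝ eα)
    (heb : Differentiable ℝ eb)
    (R : ℝ → Matrix (Fin 3) (Fin 3) ℝ)
    (hRso : ∀ t, (R t)ᵀ * R t = 1 ∧ (R t).det = 1)
    (hRder : ∀ t i j, HasDerivAt (fun s => R s i j) ((R t * skew (ω t)) i j) t)
    (heα : ∀ t, HasDerivAt eα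
      (cross (eα t) (ω t) - cross (mulVecE (R t)ᵀ αi + eα t) (eb t) - kα • eα t) t) :
    ∀ t, HasDerivAt (fun s => mulVecE (R s) (eα s))
      (cross (mulVecE (R t) (eb t)) (αi + mulVecE (R t) (eα t))
        - kα • mulVecE (R t) (eα t)) t :=
  rotated_error_equation_general αi kα ω eα eb R hRso hRder heα
end
end
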